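/- Let (v, q) solve the Stokes equations in the unit square B with zero discrepancy (v and T(v,q) agree on opposite wall pairs). Then v is constant and q is constant; moreover the rotational rigid motion is excluded, i.e., the nullspace of the empty-cell Stokes discrepancy problem is exactly three-dimensional, parametrized by (v + c, q + c₀) for c ∈ ℝ², c₀ ∈ ℝ. -/

import Mathlib

open Set

/-- directional partial derivative of a scalar field on the plane `ℂ ≅ ℝ²`;
`pd 1 f = ∂₁ f` and `pd Complex.I f = ∂₂ f`. -/
noncomputable def pd (w : ℂ) (f : ℂ → ℝ) (x : ℂ) : ℝ := fderiv ℝ f x w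

/-- Laplacian in the plane. -/
noncomputable def lap (f : ℂ → ℝ) (x : ℂ) : ℝ :=
  pd 1 (pd 1 f) x + pd Complex.I (pd Complex.I f) x

/-- first component of a planar vector field (plane `ℂ ≅ ℝ²`). -/
def re2 (f : ℂ → ℂ) : ℂ → ℝ := fun z => (f z).re

/-- second component of a planar vector field. -/
def im2 (f : ℂ → ℂ) : ℂ → ℝ := fun z => (f z).im

/-- hydrodynamic traction `T(v,q) = σ(v,q) n` with Cauchy stress
`σᵢⱼ = −δᵢⱼ q + μ(∂ᵢvⱼ + ∂ⱼvᵢ)`, for velocity `v`, pressure `q`, at the point `x`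
with (not necessarily unit) normal vector `n`; a vector in `ℂ ≅ ℝ²`. -/
noncomputable def traction (μ : ℝ) (v : ℂ → ℂ) (q : ℂ → ℝ) (x n : ℂ) : ℂ :=
  (((-(q x) + 2 * μ * pd 1 (re2 v) x) * n.re
      + μ * (pd 1 (im2 v) x + pd Complex.I (re2 v) x) * n.im : ℝ) : ℂ)
    + (((μ * (pd Complex.I (re2 v) x + pd 1 (im2 v) x)) * n.re
      + (-(q x) + 2 * μ * pd Complex.I (im2 v) x) * n.im : ℝ) : ℂ) * Complex.I

/-- `(v, q)` solves the Stokes equations `−μΔv + ∇q = 0`, `div v = 0` on `s`. -/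
def StokesOn (μ : ℝ) (v : ℂ → ℂ) (q : ℂ → ℝ) (s : Set ℂ) : Prop :=
  ∀ z ∈ s,
    μ * lap (re2 v) z = pd 1 q z ∧
    μ * lap (im2 v) z = pd Complex.I q z ∧
    pd 1 (re2 v) z + pd Complex.I (im2 v) z = 0

/-- the open unit square `B = (−1/2,1/2)²`. -/
def usq : Set ℂ :=
  {z | z.re ∈ Ioo (-(1/2) : ℝ) (1/2) ∧ z.im ∈ Ioo (-(1/2) : ℝ) (1/2)}

/-- its closure, the closed unit square `B̄`. -/
def csq : Set ℂ :=
  {z | z.re ∈ Icc (-(1/2) : ℝ) (1/2) ∧ z.im ∈ Icc (-(1/2) : ℝ) (1/2)}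

lemma pd_re2 {f : ℂ → ℂ} {x : ℂ} (hf : DifferentiableAt ℝ f x) (w : ℂ) :
    pd w (re2 f) x = (fderiv ℝ f x w).re := by
  have h : HasFDerivAt (re2 f) (Complex.reCLM.comp (fderiv ℝ f x)) x :=
    (Complex.reCLM.hasFDerivAt.comp x hf.hasFDerivAt)
  simp [pd, h.fderiv]

lemma pd_im2 {f : ℂ → ℂ} {x : ℂ} (hf : DifferentiableAt ℝ f x) (w : ℂ) :
    pd w (im2 f) x = (fderiv ℝ f x w).im := by
  have h : HasFDerivAt (im2 f) (Complex.imCLM.comp (fderiv ℝ f x)) x :=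
    (Complex.imCLM.hasFDerivAt.comp x hf.hasFDerivAt)
  simp [pd, h.fderiv]

section
variable {v : ℂ → ℂ} {U : Set ℂ}

lemma diffAt_of_c2 (hU : IsOpen U) (hv : ContDiffOn ℝ 2 v U) {z : ℂ} (hz : z ∈ U) :
    DifferentiableAt ℝ v z :=
  ((hv.differentiableOn (by norm_num)).differentiableAt (hU.mem_nhds hz))

lemma contDiffOn_fderiv (hU : IsOpen U) (hv : ContDiffOn ℝ 2 v U) :
    ContDiffOn ℝ 1 (fderiv ℝ v) U :=
  hv.fderiv_of_isOpen hU (by norm_num)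

lemma diffAt_fderiv (hU : IsOpen U) (hv : ContDiffOn ℝ 2 v U) {z : ℂ} (hz : z ∈ U) :
    DifferentiableAt ℝ (fderiv ℝ v) z :=
  ((contDiffOn_fderiv hU hv).differentiableOn (by norm_num)).differentiableAt (hU.mem_nhds hz)

/-- `pd w (re2 v)` has a derivative given by the second fderiv. -/
lemma hasFDerivAt_pd_re2 (hU : IsOpen U) (hv : ContDiffOn ℝ 2 v U) {z : ℂ} (hz : z ∈ U)
    (w : ℂ) :
    HasFDerivAt (pd w (re2 v))
      ((Complex.reCLM.comp (ContinuousLinearMap.apply ℝ ℂ w)).comp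
        (fderiv ℝ (fderiv ℝ v) z)) z := by
  have hg : HasFDerivAt (fun y => (fderiv ℝ v y w).re)
      ((Complex.reCLM.comp (ContinuousLinearMap.apply ℝ ℂ w)).comp
        (fderiv ℝ (fderiv ℝ v) z)) z :=
    ((Complex.reCLM.comp (ContinuousLinearMap.apply ℝ ℂ w)).hasFDerivAt.comp z
      (diffAt_fderiv hU hv hz).hasFDerivAt)
  refine hg.congr_of_eventuallyEq ?_
  filter_upwards [hU.mem_nhds hz] with y hy
  exact pd_re2 (diffAt_of_c2 hU hv hy) w

lemma hasFDerivAt_pd_im2 (hU : IsOpen U) (hv : ContDiffOn ℝ 2 v U) {z : ℂ} (hz : z ∈ U)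
    (w : ℂ) :
    HasFDerivAt (pd w (im2 v))
      ((Complex.imCLM.comp (ContinuousLinearMap.apply ℝ ℂ w)).comp
        (fderiv ℝ (fderiv ℝ v) z)) z := by
  have hg : HasFDerivAt (fun y => (fderiv ℝ v y w).im)
      ((Complex.imCLM.comp (ContinuousLinearMap.apply ℝ ℂ w)).comp
        (fderiv ℝ (fderiv ℝ v) z)) z :=
    ((Complex.imCLM.comp (ContinuousLinearMap.apply ℝ ℂ w)).hasFDerivAt.comp z
      (diffAt_fderiv hU hv hz).hasFDerivAt)
  refine hg.congr_of_eventuallyEq ?_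
  filter_upwards [hU.mem_nhds hz] with y hy
  exact pd_im2 (diffAt_of_c2 hU hv hy) w

lemma pd_pd_re2 (hU : IsOpen U) (hv : ContDiffOn ℝ 2 v U) {z : ℂ} (hz : z ∈ U) (w w' : ℂ) :
    pd w' (pd w (re2 v)) z = ((fderiv ℝ (fderiv ℝ v) z) w' w).re := by
  have h := (hasFDerivAt_pd_re2 hU hv hz w).fderiv
  simp [pd, h]

lemma pd_pd_im2 (hU : IsOpen U) (hv : ContDiffOn ℝ 2 v U) {z : ℂ} (hz : z ∈ U) (w w' : ℂ) :
    pd w' (pd w (im2 v)) z = ((fderiv ℝ (fderiv ℝ v) z) w' w).im := by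
  have h := (hasFDerivAt_pd_im2 hU hv hz w).fderiv
  simp [pd, h]

lemma snd_symm (hU : IsOpen U) (hv : ContDiffOn ℝ 2 v U) {z : ℂ} (hz : z ∈ U) (w w' : ℂ) :
    fderiv ℝ (fderiv ℝ v) z w w' = fderiv ℝ (fderiv ℝ v) z w' w := by
  refine second_derivative_symmetric_of_eventually (f := v) ?_
    (diffAt_fderiv hU hv hz).hasFDerivAt w w'
  filter_upwards [hU.mem_nhds hz] with y hy
  exact (diffAt_of_c2 hU hv hy).hasFDerivAt

lemma contDiffOn_pd_re2 (hU : IsOpen U) (hv : ContDiffOn ℝ 2 v U) (w : ℂ) :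
    ContDiffOn ℝ 1 (pd w (re2 v)) U := by
  have h1 : ContDiffOn ℝ 1 (fun y => (fderiv ℝ v y w).re) U :=
    (Complex.reCLM.contDiff.comp_contDiffOn
      ((contDiffOn_fderiv hU hv).clm_apply contDiffOn_const))
  exact h1.congr fun y hy => pd_re2 (diffAt_of_c2 hU hv hy) w

lemma contDiffOn_pd_im2 (hU : IsOpen U) (hv : ContDiffOn ℝ 2 v U) (w : ℂ) :
    ContDiffOn ℝ 1 (pd w (im2 v)) U := by
  have h1 : ContDiffOn ℝ 1 (fun y => (fderiv ℝ v y w).im) U :=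
    (Complex.imCLM.contDiff.comp_contDiffOn
      ((contDiffOn_fderiv hU hv).clm_apply contDiffOn_const))
  exact h1.congr fun y hy => pd_im2 (diffAt_of_c2 hU hv hy) w

end

noncomputable def Pfun (μ : ℝ) (v : ℂ → ℂ) (q : ℂ → ℝ) (z : ℂ) : ℝ :=
  (-(q z) + 2*μ*pd 1 (re2 v) z) * re2 v z
    + (μ * (pd 1 (im2 v) z + pd Complex.I (re2 v) z)) * im2 v z

noncomputable def Qfun (μ : ℝ) (v : ℂ → ℂ) (q : ℂ → ℝ) (z : ℂ) : ℝ :=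
  (μ * (pd 1 (im2 v) z + pd Complex.I (re2 v) z)) * re2 v z
    + (-(q z) + 2*μ*pd Complex.I (im2 v) z) * im2 v z

noncomputable def Dfun (μ : ℝ) (v : ℂ → ℂ) (z : ℂ) : ℝ :=
  2*μ*((pd 1 (re2 v) z)^2 + (pd Complex.I (im2 v) z)^2)
    + μ*(pd 1 (im2 v) z + pd Complex.I (re2 v) z)^2

section
variable {μ : ℝ} {v : ℂ → ℂ} {q : ℂ → ℝ} {U : Set ℂ}

lemma exists_hasFDerivAt_PQ (hU : IsOpen U) (hv : ContDiffOn ℝ 2 v U)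
    (hq : ContDiffOn ℝ 1 q U) {z : ℂ} (hz : z ∈ U) :
    ∃ P' Q' : ℂ →L[ℝ] ℝ, HasFDerivAt (Pfun μ v q) P' z ∧ HasFDerivAt (Qfun μ v q) Q' z ∧
      ∀ w : ℂ,
      (P' w = (-(fderiv ℝ q z w) + 2*μ*((fderiv ℝ (fderiv ℝ v) z w) 1).re) * (v z).re
        + (-(q z) + 2*μ*(fderiv ℝ v z 1).re) * (fderiv ℝ v z w).re
        + μ*(((fderiv ℝ (fderiv ℝ v) z w) 1).im + ((fderiv ℝ (fderiv ℝ v) z w) Complex.I).re) * (v z).im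
        + μ*((fderiv ℝ v z 1).im + (fderiv ℝ v z Complex.I).re) * (fderiv ℝ v z w).im)
      ∧ (Q' w = μ*(((fderiv ℝ (fderiv ℝ v) z w) 1).im + ((fderiv ℝ (fderiv ℝ v) z w) Complex.I).re) * (v z).re
        + μ*((fderiv ℝ v z 1).im + (fderiv ℝ v z Complex.I).re) * (fderiv ℝ v z w).re
        + (-(fderiv ℝ q z w) + 2*μ*((fderiv ℝ (fderiv ℝ v) z w) Complex.I).im) * (v z).im
        + (-(q z) + 2*μ*(fderiv ℝ v z Complex.I).im) * (fderiv ℝ v z w).im) := by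
  have hq' : HasFDerivAt q (fderiv ℝ q z) z :=
    ((hq.differentiableOn one_ne_zero).differentiableAt (hU.mem_nhds hz)).hasFDerivAt
  have hu1 : HasFDerivAt (re2 v) (Complex.reCLM.comp (fderiv ℝ v z)) z :=
    Complex.reCLM.hasFDerivAt.comp z (diffAt_of_c2 hU hv hz).hasFDerivAt
  have hu2 : HasFDerivAt (im2 v) (Complex.imCLM.comp (fderiv ℝ v z)) z :=
    Complex.imCLM.hasFDerivAt.comp z (diffAt_of_c2 hU hv hz).hasFDerivAt
  have hP := ((hq'.neg.add ((hasFDerivAt_pd_re2 hU hv hz 1).const_mul (2*μ))).mul hu1).add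
    ((((hasFDerivAt_pd_im2 hU hv hz 1).add
        (hasFDerivAt_pd_re2 hU hv hz Complex.I)).const_mul μ).mul hu2)
  have hQ := ((((hasFDerivAt_pd_im2 hU hv hz 1).add
        (hasFDerivAt_pd_re2 hU hv hz Complex.I)).const_mul μ).mul hu1).add
    ((hq'.neg.add ((hasFDerivAt_pd_im2 hU hv hz Complex.I).const_mul (2*μ))).mul hu2)
  refine ⟨_, _, hP, hQ, fun w => ⟨?_, ?_⟩⟩
  · simp [ContinuousLinearMap.add_apply, ContinuousLinearMap.smul_apply, smul_eq_mul,
      ContinuousLinearMap.coe_comp', Function.comp, ContinuousLinearMap.neg_apply,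
      ContinuousLinearMap.apply_apply, re2, im2, pd_re2 (diffAt_of_c2 hU hv hz),
      pd_im2 (diffAt_of_c2 hU hv hz)]
    ring
  · simp [ContinuousLinearMap.add_apply, ContinuousLinearMap.smul_apply, smul_eq_mul,
      ContinuousLinearMap.coe_comp', Function.comp, ContinuousLinearMap.neg_apply,
      ContinuousLinearMap.apply_apply, re2, im2, pd_re2 (diffAt_of_c2 hU hv hz),
      pd_im2 (diffAt_of_c2 hU hv hz)]
    ring

end

lemma usqX_eq : usq = Ioo (-(1/2) : ℝ) (1/2) ×ℂ Ioo (-(1/2) : ℝ) (1/2) := rfl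
lemma csqX_eq : csq = Icc (-(1/2) : ℝ) (1/2) ×ℂ Icc (-(1/2) : ℝ) (1/2) := rfl

lemma isOpen_usq : IsOpen usq := by
  rw [usqX_eq]; exact IsOpen.reProdIm isOpen_Ioo isOpen_Ioo

lemma usq_sub_csq : usq ⊆ csq := fun z hz => ⟨Ioo_subset_Icc_self hz.1, Ioo_subset_Icc_self hz.2⟩

lemma closure_usq : closure usq = csq := by
  rw [usqX_eq, Complex.closure_reProdIm, closure_Ioo (by norm_num : (-(1/2):ℝ) ≠ 1/2), csqX_eq]

lemma convex_usq : Convex ℝ usq := by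
  have : usq = Complex.equivRealProdCLM.symm '' (Ioo (-(1/2):ℝ) (1/2) ×ˢ Ioo (-(1/2):ℝ) (1/2)) := by
    ext z
    constructor
    · intro hz
      exact ⟨(z.re, z.im), ⟨hz.1, hz.2⟩, by simp [Complex.equivRealProdCLM_symm_apply,
        Complex.re_add_im]⟩
    · rintro ⟨⟨x, y⟩, hxy, rfl⟩
      simpa [usq, Complex.equivRealProdCLM_symm_apply] using hxy
  rw [this]
  exact (((convex_Ioo _ _).prod (convex_Ioo _ _))).is_linear_image
    (Complex.equivRealProdCLM.symm.toLinearMap.isLinear)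

def StokesOn' (μ : ℝ) (v : ℂ → ℂ) (q : ℂ → ℝ) (s : Set ℂ) : Prop :=
  ∀ z ∈ s,
    μ * (pd 1 (pd 1 (re2 v)) z + pd Complex.I (pd Complex.I (re2 v)) z) = pd 1 q z ∧
    μ * (pd 1 (pd 1 (im2 v)) z + pd Complex.I (pd Complex.I (im2 v)) z) = pd Complex.I q z ∧
    pd 1 (re2 v) z + pd Complex.I (im2 v) z = 0

section
variable {μ : ℝ} {v : ℂ → ℂ} {q : ℂ → ℝ} {U : Set ℂ}

lemma divd (hU : IsOpen U) (hv : ContDiffOn ℝ 2 v U) (hsub : usq ⊆ U)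
    (hdiv : ∀ y ∈ usq, (fderiv ℝ v y 1).re + (fderiv ℝ v y Complex.I).im = 0)
    {z : ℂ} (hz : z ∈ usq) (w : ℂ) :
    ((fderiv ℝ (fderiv ℝ v) z w) 1).re + ((fderiv ℝ (fderiv ℝ v) z w) Complex.I).im = 0 := by
  have hzU : z ∈ U := hsub hz
  have hh : HasFDerivAt (fun y => (fderiv ℝ v y 1).re + (fderiv ℝ v y Complex.I).im)
      (((Complex.reCLM.comp (ContinuousLinearMap.apply ℝ ℂ 1)).comp
          (fderiv ℝ (fderiv ℝ v) z)) +
        ((Complex.imCLM.comp (ContinuousLinearMap.apply ℝ ℂ Complex.I)).comp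
          (fderiv ℝ (fderiv ℝ v) z))) z := by
    exact ((Complex.reCLM.comp (ContinuousLinearMap.apply ℝ ℂ 1)).hasFDerivAt.comp z
        (diffAt_fderiv hU hv hzU).hasFDerivAt).add
      ((Complex.imCLM.comp (ContinuousLinearMap.apply ℝ ℂ Complex.I)).hasFDerivAt.comp z
        (diffAt_fderiv hU hv hzU).hasFDerivAt)
  have hzero : HasFDerivAt (fun _ : ℂ => (0:ℝ)) _ z :=
    hh.congr_of_eventuallyEq (by
      filter_upwards [isOpen_usq.mem_nhds hz] with y hy
      exact (hdiv y hy).symm)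
  have h0 := hzero.unique (hasFDerivAt_const 0 z)
  have := congrFun (congrArg (fun (L : ℂ →L[ℝ] ℝ) => (L : ℂ → ℝ)) h0) w
  simpa [ContinuousLinearMap.add_apply, ContinuousLinearMap.coe_comp', Function.comp,
    ContinuousLinearMap.apply_apply] using this

lemma key_identity (hU : IsOpen U) (hv : ContDiffOn ℝ 2 v U) (hq : ContDiffOn ℝ 1 q U)
    (hsub : usq ⊆ U) (hstokes : StokesOn' μ v q usq) {z : ℂ} (hz : z ∈ usq) :
    ∃ P' Q' : ℂ →L[ℝ] ℝ, HasFDerivAt (Pfun μ v q) P' z ∧ HasFDerivAt (Qfun μ v q) Q' z ∧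
      P' 1 + Q' Complex.I = Dfun μ v z := by
  have hzU : z ∈ U := hsub hz
  obtain ⟨P', Q', hP, hQ, hw⟩ := exists_hasFDerivAt_PQ (μ := μ) hU hv hq hzU
  refine ⟨P', Q', hP, hQ, ?_⟩
  rw [(hw 1).1, (hw Complex.I).2]
  have hdiv : ∀ y ∈ usq, (fderiv ℝ v y 1).re + (fderiv ℝ v y Complex.I).im = 0 := by
    intro y hy
    have h := (hstokes y hy).2.2
    rwa [pd_re2 (diffAt_of_c2 hU hv (hsub hy)), pd_im2 (diffAt_of_c2 hU hv (hsub hy))] at h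
  have e3 : (fderiv ℝ v z 1).re + (fderiv ℝ v z Complex.I).im = 0 := hdiv z hz
  have e4 := divd hU hv hsub hdiv hz 1
  have e5 := divd hU hv hsub hdiv hz Complex.I
  have e1 : μ * (((fderiv ℝ (fderiv ℝ v) z) 1 1).re + ((fderiv ℝ (fderiv ℝ v) z) Complex.I Complex.I).re)
      = fderiv ℝ q z 1 := by
    have h := (hstokes z hz).1
    rwa [pd_pd_re2 hU hv hzU 1 1, pd_pd_re2 hU hv hzU Complex.I Complex.I] at h
  have e2 : μ * (((fderiv ℝ (fderiv ℝ v) z) 1 1).im + ((fderiv ℝ (fderiv ℝ v) z) Complex.I Complex.I).im)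
      = fderiv ℝ q z Complex.I := by
    have h := (hstokes z hz).2.1
    rwa [pd_pd_im2 hU hv hzU 1 1, pd_pd_im2 hU hv hzU Complex.I Complex.I] at h
  have hsymm : fderiv ℝ (fderiv ℝ v) z 1 Complex.I = fderiv ℝ (fderiv ℝ v) z Complex.I 1 :=
    snd_symm hU hv hzU 1 Complex.I
  have hsymm_re := congrArg Complex.re hsymm
  have hsymm_im := congrArg Complex.im hsymm
  -- derived pointwise substitutions
  have h3 : (fderiv ℝ v z Complex.I).im = -(fderiv ℝ v z 1).re := by linarith
  have h4 : ((fderiv ℝ (fderiv ℝ v) z) Complex.I 1).im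
      = -((fderiv ℝ (fderiv ℝ v) z) 1 1).re := by
    rw [← hsymm_im]; linarith
  have h5 : ((fderiv ℝ (fderiv ℝ v) z) 1 Complex.I).re
      = -((fderiv ℝ (fderiv ℝ v) z) Complex.I Complex.I).im := by
    rw [hsymm_re]; linarith
  have hD : Dfun μ v z = 2*μ*(((fderiv ℝ v z 1).re)^2 + ((fderiv ℝ v z Complex.I).im)^2)
      + μ*((fderiv ℝ v z 1).im + (fderiv ℝ v z Complex.I).re)^2 := by
    simp [Dfun, pd_re2 (diffAt_of_c2 hU hv hzU), pd_im2 (diffAt_of_c2 hU hv hzU)]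
  rw [hD, ← e1, ← e2, h3, h4, h5]
  ring

end

lemma Pfun_eq_dot (μ : ℝ) (v : ℂ → ℂ) (q : ℂ → ℝ) (z : ℂ) :
    Pfun μ v q z = (traction μ v q z 1).re * (v z).re + (traction μ v q z 1).im * (v z).im := by
  simp only [Pfun, traction, re2, im2, Complex.add_re, Complex.add_im, Complex.ofReal_re,
    Complex.ofReal_im, Complex.mul_re, Complex.mul_im, Complex.I_re, Complex.I_im,
    Complex.one_re, Complex.one_im]
  ring

lemma Qfun_eq_dot (μ : ℝ) (v : ℂ → ℂ) (q : ℂ → ℝ) (z : ℂ) :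
    Qfun μ v q z = (traction μ v q z Complex.I).re * (v z).re
      + (traction μ v q z Complex.I).im * (v z).im := by
  simp only [Qfun, traction, re2, im2, Complex.add_re, Complex.add_im, Complex.ofReal_re,
    Complex.ofReal_im, Complex.mul_re, Complex.mul_im, Complex.I_re, Complex.I_im,
    Complex.one_re, Complex.one_im]
  ring

section
variable {μ : ℝ} {v : ℂ → ℂ} {q : ℂ → ℝ} {U : Set ℂ}

lemma contDiffOn_Pfun (hU : IsOpen U) (hv : ContDiffOn ℝ 2 v U) (hq : ContDiffOn ℝ 1 q U) :
    ContDiffOn ℝ 1 (Pfun μ v q) U := by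
  have h1 : ContDiffOn ℝ 1 (re2 v) U :=
    Complex.reCLM.contDiff.comp_contDiffOn (hv.of_le one_le_two)
  have h2 : ContDiffOn ℝ 1 (im2 v) U :=
    Complex.imCLM.contDiff.comp_contDiffOn (hv.of_le one_le_two)
  exact ((hq.neg.add (contDiffOn_const.mul (contDiffOn_pd_re2 hU hv 1))).mul h1).add
    ((contDiffOn_const.mul ((contDiffOn_pd_im2 hU hv 1).add
      (contDiffOn_pd_re2 hU hv Complex.I))).mul h2)

lemma contDiffOn_Qfun (hU : IsOpen U) (hv : ContDiffOn ℝ 2 v U) (hq : ContDiffOn ℝ 1 q U) :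
    ContDiffOn ℝ 1 (Qfun μ v q) U := by
  have h1 : ContDiffOn ℝ 1 (re2 v) U :=
    Complex.reCLM.contDiff.comp_contDiffOn (hv.of_le one_le_two)
  have h2 : ContDiffOn ℝ 1 (im2 v) U :=
    Complex.imCLM.contDiff.comp_contDiffOn (hv.of_le one_le_two)
  exact ((contDiffOn_const.mul ((contDiffOn_pd_im2 hU hv 1).add
      (contDiffOn_pd_re2 hU hv Complex.I))).mul h1).add
    ((hq.neg.add (contDiffOn_const.mul (contDiffOn_pd_im2 hU hv Complex.I))).mul h2)

lemma continuousOn_Dfun (hU : IsOpen U) (hv : ContDiffOn ℝ 2 v U) :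
    ContinuousOn (Dfun μ v) U := by
  have c1 : ContinuousOn (pd 1 (re2 v)) U := (contDiffOn_pd_re2 hU hv 1).continuousOn
  have c2 : ContinuousOn (pd Complex.I (im2 v)) U := (contDiffOn_pd_im2 hU hv Complex.I).continuousOn
  have c3 : ContinuousOn (pd 1 (im2 v)) U := (contDiffOn_pd_im2 hU hv 1).continuousOn
  have c4 : ContinuousOn (pd Complex.I (re2 v)) U := (contDiffOn_pd_re2 hU hv Complex.I).continuousOn
  exact (continuousOn_const.mul ((c1.pow 2).add (c2.pow 2))).add
    (continuousOn_const.mul ((c3.add c4).pow 2))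

end

open MeasureTheory in
lemma eq_zero_of_setIntegral_zero {S : Set (ℝ × ℝ)} (hS : IsOpen S) {h : ℝ × ℝ → ℝ}
    (hc : ContinuousOn h S) (hnn : ∀ p ∈ S, 0 ≤ h p) (hint : IntegrableOn h S)
    (hzero : (∫ p in S, h p) = 0) : ∀ p ∈ S, h p = 0 := by
  have hae : h =ᵐ[volume.restrict S] 0 :=
    (integral_eq_zero_iff_of_nonneg_ae
      ((ae_restrict_iff' hS.measurableSet).2 (Filter.Eventually.of_forall hnn)) hint).1 hzero
  intro p hp
  by_contra hne
  have hpos : 0 < h p := lt_of_le_of_ne (hnn p hp) (Ne.symm hne)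
  have hcontAt : ContinuousAt h p := hc.continuousAt (hS.mem_nhds hp)
  have hev : ∀ᶠ x in nhds p, h p / 2 < h x :=
    hcontAt.eventually (eventually_gt_nhds (by linarith))
  obtain ⟨ε, hε, hball⟩ := Metric.mem_nhds_iff.1 (Filter.inter_mem hev (hS.mem_nhds hp))
  have hsub2 : Metric.ball p ε ⊆ {x | h x ≠ 0} ∩ S := by
    intro x hx
    obtain ⟨h1, h2⟩ := hball hx
    exact ⟨ne_of_gt (lt_trans (by linarith) h1), h2⟩
  have hnull : volume.restrict S {x | h x ≠ 0} = 0 := by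
    have := hae
    rwa [Filter.EventuallyEq, ae_iff] at this
  have hnull2 : volume ({x | h x ≠ 0} ∩ S) = 0 := by
    rwa [Measure.restrict_apply' hS.measurableSet] at hnull
  have : volume (Metric.ball p ε) = 0 := measure_mono_null hsub2 hnull2
  exact absurd this (Metric.measure_ball_pos volume p hε).ne'

open MeasureTheory in
lemma energy_zero {μ : ℝ} {v : ℂ → ℂ} {q : ℂ → ℝ} {U : Set ℂ}
    (hμ : 0 < μ) (hU : IsOpen U) (hv : ContDiffOn ℝ 2 v U) (hq : ContDiffOn ℝ 1 q U)
    (hsub : csq ⊆ U) (hstokes : StokesOn' μ v q usq)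
    (hPside : ∀ y ∈ Icc (-(1/2):ℝ) (1/2),
      Pfun μ v q (((1/2:ℝ):ℂ) + (y:ℂ)*Complex.I) = Pfun μ v q (((-(1/2):ℝ):ℂ) + (y:ℂ)*Complex.I))
    (hQside : ∀ x ∈ Icc (-(1/2):ℝ) (1/2),
      Qfun μ v q ((x:ℂ) + ((1/2:ℝ):ℂ)*Complex.I) = Qfun μ v q ((x:ℂ) + ((-(1/2):ℝ):ℂ)*Complex.I)) :
    ∀ z ∈ usq, Dfun μ v z = 0 := by
  classical
  set LL : ℝ × ℝ →L[ℝ] ℂ := ↑(Complex.equivRealProdCLM.symm) with hLLdef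
  have hLL : ∀ p : ℝ × ℝ, LL p = (p.1 : ℂ) + (p.2 : ℂ) * Complex.I := fun p => by
    rw [hLLdef, ContinuousLinearEquiv.coe_coe]
    exact Complex.equivRealProdCLM_symm_apply p
  have husqU : usq ⊆ U := usq_sub_csq.trans hsub
  set a : ℝ × ℝ := (-(1/2), -(1/2)) with ha
  set b : ℝ × ℝ := (1/2, 1/2) with hb
  have hle : a ≤ b := by
    constructor <;> norm_num [ha, hb]
  set f : ℝ × ℝ → ℝ := fun p => Pfun μ v q (LL p) with hf
  set g : ℝ × ℝ → ℝ := fun p => Qfun μ v q (LL p) with hg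
  set f' : ℝ × ℝ → ℝ × ℝ →L[ℝ] ℝ := fun p => (fderiv ℝ (Pfun μ v q) (LL p)).comp LL with hf'
  set g' : ℝ × ℝ → ℝ × ℝ →L[ℝ] ℝ := fun p => (fderiv ℝ (Qfun μ v q) (LL p)).comp LL with hg'
  have hmem : ∀ p ∈ Ioo a.1 b.1 ×ˢ Ioo a.2 b.2, LL p ∈ usq := by
    rintro p ⟨h1, h2⟩
    refine ⟨?_, ?_⟩ <;> simp [hLL, usq] <;> [exact ⟨by simpa [ha] using h1.1, by simpa [hb] using h1.2⟩;
      exact ⟨by simpa [ha] using h2.1, by simpa [hb] using h2.2⟩]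
  have hIccmem : ∀ p ∈ Icc a b, LL p ∈ csq := by
    rintro p hp
    rw [Icc_prod_eq] at hp
    refine ⟨?_, ?_⟩ <;> simp [hLL, csq] <;>
      [exact ⟨by simpa [ha] using hp.1.1, by simpa [hb] using hp.1.2⟩;
       exact ⟨by simpa [ha] using hp.2.1, by simpa [hb] using hp.2.2⟩]
  have hL10 : LL ((1:ℝ), (0:ℝ)) = (1 : ℂ) := by simp [hLL]
  have hL01 : LL ((0:ℝ), (1:ℝ)) = Complex.I := by simp [hLL]
  have hintegrand_eq : ∀ p : ℝ × ℝ, f' p (1, 0) + g' p (0, 1)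
      = fderiv ℝ (Pfun μ v q) (LL p) 1 + fderiv ℝ (Qfun μ v q) (LL p) Complex.I := by
    intro p
    simp only [hf', hg', ContinuousLinearMap.coe_comp', Function.comp_apply]
    rw [show ((1:ℝ), (0:ℝ)) = ((1:ℝ), (0:ℝ)) from rfl, hL10, hL01]
  have hfd1 : ContinuousOn (fun z => fderiv ℝ (Pfun μ v q) z 1) U :=
    (ContinuousLinearMap.apply ℝ ℝ (1:ℂ)).continuous.comp_continuousOn
      ((contDiffOn_Pfun hU hv hq).continuousOn_fderiv_of_isOpen hU le_rfl)
  have hgdI : ContinuousOn (fun z => fderiv ℝ (Qfun μ v q) z Complex.I) U :=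
    (ContinuousLinearMap.apply ℝ ℝ Complex.I).continuous.comp_continuousOn
      ((contDiffOn_Qfun hU hv hq).continuousOn_fderiv_of_isOpen hU le_rfl)
  have hmapsIcc : MapsTo LL (Icc a b) U := fun p hp => hsub (hIccmem p hp)
  have Hcf : ContinuousOn f (Icc a b) :=
    ((contDiffOn_Pfun hU hv hq).continuousOn).comp LL.continuous.continuousOn hmapsIcc
  have Hcg : ContinuousOn g (Icc a b) :=
    ((contDiffOn_Qfun hU hv hq).continuousOn).comp LL.continuous.continuousOn hmapsIcc
  have Hcint : ContinuousOn (fun p => f' p (1, 0) + g' p (0, 1)) (Icc a b) := by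
    refine ContinuousOn.congr (((hfd1.comp LL.continuous.continuousOn hmapsIcc).add
      (hgdI.comp LL.continuous.continuousOn hmapsIcc))) fun p _ => hintegrand_eq p
  have Hi : IntegrableOn (fun p => f' p (1, 0) + g' p (0, 1)) (Icc a b) :=
    Hcint.integrableOn_compact isCompact_Icc
  have Hdf : ∀ p ∈ Ioo a.1 b.1 ×ˢ Ioo a.2 b.2 \ (∅ : Set (ℝ × ℝ)),
      HasFDerivAt f (f' p) p := by
    rintro p ⟨hp, -⟩
    obtain ⟨P', Q', hP, hQ, -⟩ := key_identity hU hv hq husqU hstokes (hmem p hp)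
    have : f' p = P'.comp LL := by simp only [hf']; rw [hP.fderiv]
    rw [this]
    exact hP.comp p LL.hasFDerivAt
  have Hdg : ∀ p ∈ Ioo a.1 b.1 ×ˢ Ioo a.2 b.2 \ (∅ : Set (ℝ × ℝ)),
      HasFDerivAt g (g' p) p := by
    rintro p ⟨hp, -⟩
    obtain ⟨P', Q', hP, hQ, -⟩ := key_identity hU hv hq husqU hstokes (hmem p hp)
    have : g' p = Q'.comp LL := by simp only [hg']; rw [hQ.fderiv]
    rw [this]
    exact hQ.comp p LL.hasFDerivAt
  have key := integral_divergence_prod_Icc_of_hasFDerivAt_off_countable_of_le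
    f g f' g' a b hle ∅ countable_empty Hcf Hcg Hdf Hdg Hi
  -- boundary terms vanish
  have hbdry : (((∫ x in a.1..b.1, g (x, b.2)) - ∫ x in a.1..b.1, g (x, a.2)) +
          ∫ y in a.2..b.2, f (b.1, y)) - ∫ y in a.2..b.2, f (a.1, y) = 0 := by
    have h1 : ∫ x in a.1..b.1, g (x, b.2) = ∫ x in a.1..b.1, g (x, a.2) := by
      refine intervalIntegral.integral_congr ?_
      intro x hx
      have hx' : x ∈ Icc (-(1/2):ℝ) (1/2) := by
        rwa [uIcc_of_le (by norm_num [ha, hb] : a.1 ≤ b.1), ha, hb] at hx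
      simpa [hg, hLL, ha, hb] using hQside x hx'
    have h2 : ∫ y in a.2..b.2, f (b.1, y) = ∫ y in a.2..b.2, f (a.1, y) := by
      refine intervalIntegral.integral_congr ?_
      intro y hy
      have hy' : y ∈ Icc (-(1/2):ℝ) (1/2) := by
        rwa [uIcc_of_le (by norm_num [ha, hb] : a.2 ≤ b.2), ha, hb] at hy
      simpa [hf, hLL, ha, hb] using hPside y hy'
    rw [h1, h2]; ring
  rw [hbdry] at key
  -- pass to the open square
  set IooP : Set (ℝ × ℝ) := Ioo a.1 b.1 ×ˢ Ioo a.2 b.2 with hIooP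
  have hIooSub : IooP ⊆ Icc a b := by
    rw [Icc_prod_eq]
    exact prod_mono Ioo_subset_Icc_self Ioo_subset_Icc_self
  have hfrontier_null : volume (Icc a b \ IooP) = 0 := by
    have h1 : Icc a b \ IooP ⊆ frontier (Icc a b) := by
      rw [isClosed_Icc.frontier_eq]
      refine diff_subset_diff_right ?_
      simp only [Icc_prod_eq, interior_prod_eq, interior_Icc]
      exact fun x hx => ⟨hx.1, hx.2⟩
    refine measure_mono_null h1 ?_
    have : Convex ℝ (Icc a b) := by
      rw [Icc_prod_eq]; exact (convex_Icc _ _).prod (convex_Icc _ _)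
    exact this.addHaar_frontier volume
  have haeeq : (Icc a b : Set (ℝ × ℝ)) =ᵐ[volume] IooP := by
    refine (MeasureTheory.ae_eq_set).2 ⟨hfrontier_null, ?_⟩
    rw [diff_eq_empty.2 hIooSub]
    exact measure_empty
  have hIkey : (∫ p in IooP, (f' p (1, 0) + g' p (0, 1))) = 0 := by
    rw [← setIntegral_congr_set haeeq]
    exact key
  have hEq : ∀ p ∈ IooP, f' p (1, 0) + g' p (0, 1) = Dfun μ v (LL p) := by
    intro p hp
    obtain ⟨P', Q', hP, hQ, hval⟩ := key_identity hU hv hq husqU hstokes (hmem p hp)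
    rw [hintegrand_eq p, hP.fderiv, hQ.fderiv, hval]
  have hOpen : IsOpen IooP := isOpen_Ioo.prod isOpen_Ioo
  have hIkey2 : (∫ p in IooP, Dfun μ v (LL p)) = 0 := by
    rw [← setIntegral_congr_fun hOpen.measurableSet hEq]
    exact hIkey
  have hintD : IntegrableOn (fun p => Dfun μ v (LL p)) IooP :=
    (Hi.mono_set hIooSub).congr_fun hEq hOpen.measurableSet
  have hcontD : ContinuousOn (fun p => Dfun μ v (LL p)) IooP :=
    (continuousOn_Dfun hU hv).comp LL.continuous.continuousOn fun p hp => husqU (hmem p hp)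
  have hnnD : ∀ p ∈ IooP, 0 ≤ Dfun μ v (LL p) := by
    intro p _
    have := hμ.le
    simp only [Dfun]
    positivity
  have hzero := eq_zero_of_setIntegral_zero hOpen hcontD hnnD hintD hIkey2
  intro z hz
  have hp : (z.re, z.im) ∈ IooP := by
    obtain ⟨⟨h1, h2⟩, h3, h4⟩ := hz
    refine ⟨⟨?_, ?_⟩, ⟨?_, ?_⟩⟩ <;> simp [ha, hb] <;> linarith
  have := hzero (z.re, z.im) hp
  rwa [show LL (z.re, z.im) = z by rw [hLL]; simpa using Complex.re_add_im z] at this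

lemma clm_basis {F : Type*} [NormedAddCommGroup F] [NormedSpace ℝ F] (f : ℂ →L[ℝ] F) (w : ℂ) :
    f w = w.re • f 1 + w.im • f Complex.I := by
  have hw : w = w.re • (1:ℂ) + w.im • Complex.I := by
    apply Complex.ext <;> simp
  conv_lhs => rw [hw]
  rw [map_add, map_smul, map_smul]

lemma clm_eq_zero {F : Type*} [NormedAddCommGroup F] [NormedSpace ℝ F] (f : ℂ →L[ℝ] F)
    (h1 : f 1 = 0) (hI : f Complex.I = 0) : f = 0 := by
  apply ContinuousLinearMap.ext
  intro w
  rw [clm_basis f w, h1, hI]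
  simp

section
variable {μ : ℝ} {v : ℂ → ℂ} {q : ℂ → ℝ} {U : Set ℂ}

lemma fderiv_zero_on_usq {h : ℂ → ℝ} {H : ℂ →L[ℝ] ℝ} {z : ℂ}
    (hh : HasFDerivAt h H z) (hz : z ∈ usq) (h0 : ∀ y ∈ usq, h y = 0) : H = 0 :=
  (hh.congr_of_eventuallyEq (by
    filter_upwards [isOpen_usq.mem_nhds hz] with y hy using (h0 y hy).symm)).unique
    (hasFDerivAt_const 0 z)

lemma hasFDerivAt_Acomp (hU : IsOpen U) (hv : ContDiffOn ℝ 2 v U) {z : ℂ} (hzU : z ∈ U)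
    (φ : ℂ →L[ℝ] ℝ) (w : ℂ) :
    HasFDerivAt (fun y => φ (fderiv ℝ v y w))
      ((φ.comp (ContinuousLinearMap.apply ℝ ℂ w)).comp (fderiv ℝ (fderiv ℝ v) z)) z :=
  (φ.comp (ContinuousLinearMap.apply ℝ ℂ w)).hasFDerivAt.comp z
    (diffAt_fderiv hU hv hzU).hasFDerivAt

lemma gradient_facts (hμ : 0 < μ) (hD : ∀ z ∈ usq, Dfun μ v z = 0)
    (hU : IsOpen U) (hv : ContDiffOn ℝ 2 v U) (husqU : usq ⊆ U) :
    ∀ y ∈ usq, (fderiv ℝ v y 1).re = 0 ∧ (fderiv ℝ v y Complex.I).im = 0 ∧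
      (fderiv ℝ v y 1).im + (fderiv ℝ v y Complex.I).re = 0 := by
  intro y hy
  have h := hD y hy
  have hyU := husqU hy
  rw [show Dfun μ v y = 2*μ*(((fderiv ℝ v y 1).re)^2 + ((fderiv ℝ v y Complex.I).im)^2)
      + μ*((fderiv ℝ v y 1).im + (fderiv ℝ v y Complex.I).re)^2 by
    simp [Dfun, pd_re2 (diffAt_of_c2 hU hv hyU), pd_im2 (diffAt_of_c2 hU hv hyU)]] at h
  refine ⟨?_, ?_, ?_⟩ <;>
  · rw [← sq_eq_zero_iff]
    nlinarith [sq_nonneg ((fderiv ℝ v y 1).re), sq_nonneg ((fderiv ℝ v y Complex.I).im),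
      sq_nonneg ((fderiv ℝ v y 1).im + (fderiv ℝ v y Complex.I).re)]

lemma B_zero (hμ : 0 < μ) (hD : ∀ z ∈ usq, Dfun μ v z = 0)
    (hU : IsOpen U) (hv : ContDiffOn ℝ 2 v U) (husqU : usq ⊆ U)
    {z : ℂ} (hz : z ∈ usq) : fderiv ℝ (fderiv ℝ v) z = 0 := by
  have hzU := husqU hz
  have facts := gradient_facts hμ hD hU hv husqU
  set B := fderiv ℝ (fderiv ℝ v) z with hB
  have hZ1 : ∀ w' : ℂ, (B w' 1).re = 0 := by
    intro w'
    have h := fderiv_zero_on_usq (hasFDerivAt_Acomp hU hv hzU Complex.reCLM 1) hz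
      (fun y hy => (facts y hy).1)
    have := congrFun (congrArg (fun (L : ℂ →L[ℝ] ℝ) => (L : ℂ → ℝ)) h) w'
    simpa using this
  have hZ2 : ∀ w' : ℂ, (B w' Complex.I).im = 0 := by
    intro w'
    have h := fderiv_zero_on_usq (hasFDerivAt_Acomp hU hv hzU Complex.imCLM Complex.I) hz
      (fun y hy => (facts y hy).2.1)
    have := congrFun (congrArg (fun (L : ℂ →L[ℝ] ℝ) => (L : ℂ → ℝ)) h) w'
    simpa using this
  have hZ3 : ∀ w' : ℂ, (B w' 1).im + (B w' Complex.I).re = 0 := by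
    intro w'
    have hh := (hasFDerivAt_Acomp hU hv hzU Complex.imCLM 1).add
      (hasFDerivAt_Acomp hU hv hzU Complex.reCLM Complex.I)
    have h := fderiv_zero_on_usq hh hz (fun y hy => (facts y hy).2.2)
    have := congrFun (congrArg (fun (L : ℂ →L[ℝ] ℝ) => (L : ℂ → ℝ)) h) w'
    simpa using this
  have S : B 1 Complex.I = B Complex.I 1 := snd_symm hU hv hzU 1 Complex.I
  have e11 : B 1 1 = 0 := by
    apply Complex.ext
    · exact hZ1 1
    · have h1 : (B 1 Complex.I).re = 0 := by rw [congrArg Complex.re S]; exact hZ1 Complex.I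
      have := hZ3 1; simp; linarith
  have e1I : B 1 Complex.I = 0 := by
    apply Complex.ext
    · rw [congrArg Complex.re S]; exact hZ1 Complex.I
    · exact hZ2 1
  have eI1 : B Complex.I 1 = 0 := S ▸ e1I
  have eII : B Complex.I Complex.I = 0 := by
    apply Complex.ext
    · have h1 : (B Complex.I 1).im = 0 := by rw [eI1]; simp
      have := hZ3 Complex.I; simp; linarith
    · exact hZ2 Complex.I
  exact clm_eq_zero _ (clm_eq_zero _ e11 e1I) (clm_eq_zero _ eI1 eII)

lemma zero_mem_usq : (0:ℂ) ∈ usq := by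
  constructor <;> norm_num

lemma A_const (hμ : 0 < μ) (hD : ∀ z ∈ usq, Dfun μ v z = 0)
    (hU : IsOpen U) (hv : ContDiffOn ℝ 2 v U) (husqU : usq ⊆ U)
    {z : ℂ} (hz : z ∈ usq) : fderiv ℝ v z = fderiv ℝ v 0 := by
  refine convex_usq.is_const_of_fderivWithin_eq_zero
    (((contDiffOn_fderiv hU hv).differentiableOn one_ne_zero).mono husqU) ?_ hz zero_mem_usq
  intro x hx
  rw [fderivWithin_of_isOpen isOpen_usq hx]
  exact B_zero hμ hD hU hv husqU hx

end

section
variable {μ : ℝ} {v : ℂ → ℂ} {q : ℂ → ℝ} {U : Set ℂ}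

lemma csq_mem_ofReal {x : ℝ} (hx : x ∈ Icc (-(1/2):ℝ) (1/2)) : (x:ℂ) ∈ csq := by
  refine ⟨by simpa using hx, by norm_num⟩

lemma fderiv_v_zero (hμ : 0 < μ) (hD : ∀ z ∈ usq, Dfun μ v z = 0)
    (hU : IsOpen U) (hv : ContDiffOn ℝ 2 v U) (hsub : csq ⊆ U)
    (hv1 : ∀ y ∈ Icc (-(1/2) : ℝ) (1/2),
      v ((1/2 : ℂ) + (y : ℂ) * Complex.I) = v ((-(1/2) : ℂ) + (y : ℂ) * Complex.I))
    {z : ℂ} (hz : z ∈ usq) : fderiv ℝ v z = 0 := by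
  have husqU : usq ⊆ U := usq_sub_csq.trans hsub
  have facts := gradient_facts hμ hD hU hv husqU
  set ω : ℝ := (fderiv ℝ v 0 1).im with hω
  -- MVT along the real axis kills ω
  have hmem : ∀ x : ℝ, x ∈ Ioo (-(1/2):ℝ) (1/2) → ((x:ℂ) ∈ usq) := by
    intro x hx
    exact ⟨by simpa using hx, by norm_num⟩
  have hderiv : ∀ x ∈ Ioo (-(1/2):ℝ) (1/2), HasDerivAt (fun x : ℝ => (v (x:ℂ)).im) ω x := by
    intro x hx
    have hxu : (x:ℂ) ∈ usq := hmem x hx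
    have hvd : HasDerivAt (fun x : ℝ => v (x:ℂ)) (fderiv ℝ v (x:ℂ) 1) x := by
      have h1 : HasDerivAt (fun x : ℝ => (x:ℂ)) 1 x := by
        exact Complex.ofRealCLM.hasDerivAt (x := x)
      exact (diffAt_of_c2 hU hv (husqU hxu)).hasFDerivAt.comp_hasDerivAt x h1
    have him : HasDerivAt (fun x : ℝ => (v (x:ℂ)).im) ((fderiv ℝ v (x:ℂ) 1).im) x :=
      Complex.imCLM.hasFDerivAt.comp_hasDerivAt x hvd
    rwa [A_const hμ hD hU hv husqU hxu] at him
  have hcont : ContinuousOn (fun x : ℝ => (v (x:ℂ)).im) (Icc (-(1/2):ℝ) (1/2)) := by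
    apply Complex.continuous_im.comp_continuousOn
    exact (hv.continuousOn).comp Complex.continuous_ofReal.continuousOn
      (fun x hx => hsub (csq_mem_ofReal hx))
  obtain ⟨c, hc, hc2⟩ := exists_hasDerivAt_eq_slope (fun x : ℝ => (v (x:ℂ)).im) (fun _ => ω)
    (by norm_num : (-(1/2):ℝ) < 1/2) hcont hderiv
  have hends : v ((1/2:ℝ):ℂ) = v ((-(1/2):ℝ):ℂ) := by
    have := hv1 0 (by norm_num)
    simpa using this
  have hω0 : ω = 0 := by
    rw [hc2, hends]
    norm_num
  -- now the constant gradient is zero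
  rw [A_const hμ hD hU hv husqU hz]
  have h0 := facts 0 zero_mem_usq
  refine clm_eq_zero _ ?_ ?_
  · exact Complex.ext h0.1 hω0
  · refine Complex.ext ?_ h0.2.1
    have := h0.2.2
    have : (fderiv ℝ v 0 Complex.I).re = -ω := by rw [hω]; linarith
    rw [this, hω0, neg_zero]
    simp

lemma v_const_usq (hμ : 0 < μ) (hD : ∀ z ∈ usq, Dfun μ v z = 0)
    (hU : IsOpen U) (hv : ContDiffOn ℝ 2 v U) (hsub : csq ⊆ U)
    (hv1 : ∀ y ∈ Icc (-(1/2) : ℝ) (1/2),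
      v ((1/2 : ℂ) + (y : ℂ) * Complex.I) = v ((-(1/2) : ℂ) + (y : ℂ) * Complex.I))
    {z : ℂ} (hz : z ∈ usq) : v z = v 0 := by
  have husqU : usq ⊆ U := usq_sub_csq.trans hsub
  refine convex_usq.is_const_of_fderivWithin_eq_zero
    ((hv.differentiableOn (by norm_num)).mono husqU) ?_ hz zero_mem_usq
  intro x hx
  rw [fderivWithin_of_isOpen isOpen_usq hx]
  exact fderiv_v_zero hμ hD hU hv hsub hv1 hx

lemma q_const_usq (hμ : 0 < μ) (hD : ∀ z ∈ usq, Dfun μ v z = 0)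
    (hU : IsOpen U) (hv : ContDiffOn ℝ 2 v U) (hq : ContDiffOn ℝ 1 q U) (hsub : csq ⊆ U)
    (hstokes : StokesOn' μ v q usq)
    {z : ℂ} (hz : z ∈ usq) : q z = q 0 := by
  have husqU : usq ⊆ U := usq_sub_csq.trans hsub
  refine convex_usq.is_const_of_fderivWithin_eq_zero
    ((hq.differentiableOn one_ne_zero).mono husqU) ?_ hz zero_mem_usq
  intro x hx
  rw [fderivWithin_of_isOpen isOpen_usq hx]
  have hxU := husqU hx
  have hB := B_zero hμ hD hU hv husqU hx
  refine clm_eq_zero _ ?_ ?_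
  · have h := (hstokes x hx).1
    rw [pd_pd_re2 hU hv hxU 1 1, pd_pd_re2 hU hv hxU Complex.I Complex.I, hB] at h
    simpa [pd] using h.symm
  · have h := (hstokes x hx).2.1
    rw [pd_pd_im2 hU hv hxU 1 1, pd_pd_im2 hU hv hxU Complex.I Complex.I, hB] at h
    simpa [pd] using h.symm

end

lemma const_on_closure {X : Type*} [NormedAddCommGroup X] {f : ℂ → X} {U : Set ℂ} {c : X}
    (hU : IsOpen U) (hc : ContinuousOn f U) (hsub : csq ⊆ U)
    (h : ∀ z ∈ usq, f z = c) : ∀ z ∈ csq, f z = c := by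
  intro z hz
  have hzc : z ∈ closure usq := by rw [closure_usq]; exact hz
  have hne : (nhdsWithin z usq).NeBot := mem_closure_iff_nhdsWithin_neBot.1 hzc
  have h1 : Filter.Tendsto f (nhdsWithin z usq) (nhds (f z)) :=
    ((hc.continuousAt (hU.mem_nhds (hsub hz))).continuousWithinAt).tendsto
  have h2 : Filter.Tendsto f (nhdsWithin z usq) (nhds c) := by
    refine Filter.Tendsto.congr' ?_ tendsto_const_nhds
    filter_upwards [self_mem_nhdsWithin] with y hy
    exact (h y hy).symm
  exact tendsto_nhds_unique h1 h2

/-- **Nullspace of the empty-cell Stokes discrepancy problem.**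
Let `(v, q)` solve the Stokes equations in the unit square `B = (−1/2,1/2)²`
(smooth up to the closure, formalized on an open neighborhood `U` of `B̄`) with zero
discrepancy: `v` and the traction `T(v,q)` agree on the opposite wall pairs `R/L`
and `U/D`. Then `v` is constant and `q` is constant on `B̄`; in particular the
rotational rigid motion is excluded, and the nullspace of the empty-cell Stokes
discrepancy problem is exactly the three-parameter family `(v + c, q + c₀)`,
`c ∈ ℝ²`, `c₀ ∈ ℝ`. -/
theorem stmt10 (μ : ℝ) (hμ : 0 < μ) (v : ℂ → ℂ) (q : ℂ → ℝ)
    (U : Set ℂ) (hU : IsOpen U) (hsub : csq ⊆ U)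
    (hv : ContDiffOn ℝ 2 v U) (hq : ContDiffOn ℝ 1 q U)
    (hstokes : StokesOn μ v q usq)
    (hv1 : ∀ y ∈ Icc (-(1/2) : ℝ) (1/2),
      v ((1/2 : ℂ) + (y : ℂ) * Complex.I) = v ((-(1/2) : ℂ) + (y : ℂ) * Complex.I))
    (hT1 : ∀ y ∈ Icc (-(1/2) : ℝ) (1/2),
      traction μ v q ((1/2 : ℂ) + (y : ℂ) * Complex.I) 1
        = traction μ v q ((-(1/2) : ℂ) + (y : ℂ) * Complex.I) 1)
    (hv2 : ∀ x ∈ Icc (-(1/2) : ℝ) (1/2),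
      v ((x : ℂ) + (1/2 : ℂ) * Complex.I) = v ((x : ℂ) + (-(1/2) : ℂ) * Complex.I))
    (hT2 : ∀ x ∈ Icc (-(1/2) : ℝ) (1/2),
      traction μ v q ((x : ℂ) + (1/2 : ℂ) * Complex.I) Complex.I
        = traction μ v q ((x : ℂ) + (-(1/2) : ℂ) * Complex.I) Complex.I) :
    ∃ (c : ℂ) (c₀ : ℝ), ∀ z ∈ csq, v z = c ∧ q z = c₀ := by
  have hstokes' : StokesOn' μ v q usq := hstokes
  have hc1 : (((1/2:ℝ)):ℂ) = (1/2:ℂ) := by norm_num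
  have hc2 : (((-(1/2):ℝ)):ℂ) = (-(1/2):ℂ) := by norm_num
  have hPside : ∀ y ∈ Icc (-(1/2):ℝ) (1/2),
      Pfun μ v q (((1/2:ℝ):ℂ) + (y:ℂ)*Complex.I)
        = Pfun μ v q (((-(1/2):ℝ):ℂ) + (y:ℂ)*Complex.I) := by
    intro y hy
    rw [Pfun_eq_dot, Pfun_eq_dot, hc1, hc2, hv1 y hy, hT1 y hy]
  have hQside : ∀ x ∈ Icc (-(1/2):ℝ) (1/2),
      Qfun μ v q ((x:ℂ) + ((1/2:ℝ):ℂ)*Complex.I)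
        = Qfun μ v q ((x:ℂ) + ((-(1/2):ℝ):ℂ)*Complex.I) := by
    intro x hx
    rw [Qfun_eq_dot, Qfun_eq_dot, hc1, hc2, hv2 x hx, hT2 x hx]
  have hD : ∀ z ∈ usq, Dfun μ v z = 0 :=
    energy_zero hμ hU hv hq hsub hstokes' hPside hQside
  refine ⟨v 0, q 0, fun z hz => ⟨?_, ?_⟩⟩
  · exact const_on_closure hU hv.continuousOn hsub
      (fun y hy => v_const_usq hμ hD hU hv hsub hv1 hy) z hz
  · exact const_on_closure hU hq.continuousOn hsub
      (fun y hy => q_const_usq hμ hD hU hv hq hsub hstokes' hy) z hz
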